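/- arXiv:0712.2863 — 2 statements merged into one kernel-verified Lean document; each statement's English description precedes it below -/
import Mathlib

section
/- Closure property of the ESP: if ψ_n → ψ, ℓ_n → ℓ, r_n → r and φ_n → φ uniformly on compact subsets of [0,∞), and for each n the pair (φ_n, φ_n − ψ_n) solves the extended Skorokhod problem on [ℓ_n(·), r_n(·)] for ψ_n, then (φ, φ − ψ) solves the extended Skorokhod problem on [ℓ(·), r(·)] for ψ. -/
/-!
The ESP splits into two symmetric halves: `η` may only increase while `φ < r`, and `-η` may only
increase while `φ > ℓ` (`MonotoneWhilePos`); each half survives locally uniform limits.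
The jump condition `η (t-) ≤ η t` passes to the limit because left limits commute with uniform
limits. For monotonicity on `[s, t]` with `φ < r` on `(s, t]`: right-continuity of `r - φ` makes
it bounded away from `0` on a short interval `[u, v]` to the right of each `u ∈ (s, t)`, so
`φ_n < r_n` there for large `n` and `η u ≤ η v` in the limit. A supremum argument, in which the
jump condition carries the induction through the supremum, turns these local steps into
`η s' ≤ η t` for every `s' ∈ (s, t]`, and right-continuity of `η` at `s` finishes.
-/

open Set Filter

/-- A càdlàg real-valued function on `[0, ∞)`. -/
def Cadlag (f : ℝ → ℝ) : Prop :=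
  ∀ t : ℝ, 0 ≤ t → ContinuousWithinAt f (Set.Ici t) t ∧
    (0 < t → ∃ l : ℝ, Filter.Tendsto f (nhdsWithin t (Set.Iio t)) (nhds l))

/-- `(φ, η)` solves the extended Skorokhod problem (ESP) on the time-dependent
interval `[ℓ(·), r(·)]` for the input `ψ`. -/
def ESP (l r ψ φ η : ℝ → ℝ) : Prop :=
  (∀ t : ℝ, 0 ≤ t → φ t = ψ t + η t ∧ l t ≤ φ t ∧ φ t ≤ r t) ∧
  (∀ s t : ℝ, 0 ≤ s → s ≤ t → (∀ u, s < u → u ≤ t → φ u < r u) → η s ≤ η t) ∧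
  (∀ s t : ℝ, 0 ≤ s → s ≤ t → (∀ u, s < u → u ≤ t → l u < φ u) → η t ≤ η s) ∧
  (∀ t : ℝ, 0 < t →
    (φ t < r t → Function.leftLim η t ≤ η t) ∧
    (l t < φ t → η t ≤ Function.leftLim η t)) ∧
  ((φ 0 < r 0 → 0 ≤ η 0) ∧ (l 0 < φ 0 → η 0 ≤ 0))

/-- `(φ, η)` together with the pair of nondecreasing right-continuous constraining
processes `(η_ℓ, η_r)` solves the Skorokhod problem (SP) on `[ℓ(·), r(·)]` for `ψ`:
`φ = ψ + η ∈ [ℓ, r]`, `η = η_ℓ - η_r`, and the Lebesgue–Stieltjes measures of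
`η_ℓ` and `η_r` do not charge `{φ > ℓ}` and `{φ < r}` respectively. -/
def SPwith (l r ψ φ η : ℝ → ℝ) (ηl ηr : StieltjesFunction ℝ) : Prop :=
  (∀ t : ℝ, 0 ≤ t → φ t = ψ t + η t ∧ l t ≤ φ t ∧ φ t ≤ r t) ∧
  (∀ t : ℝ, 0 ≤ t → η t = ηl t - ηr t) ∧
  ηl.measure {s : ℝ | 0 ≤ s ∧ l s < φ s} = 0 ∧
  ηr.measure {s : ℝ | 0 ≤ s ∧ φ s < r s} = 0

/-- `(φ, η)` solves the Skorokhod problem on `[ℓ(·), r(·)]` for `ψ`. -/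
def SP (l r ψ φ η : ℝ → ℝ) : Prop :=
  ∃ ηl ηr : StieltjesFunction ℝ, SPwith l r ψ φ η ηl ηr

open Topology Function

theorem Function.leftLim_neg {α β : Type*} [LinearOrder α] [TopologicalSpace α] [OrderTopology α]
    [TopologicalSpace β] [InvolutiveNeg β] [ContinuousNeg β] [T2Space β] (f : α → β) (a : α) :
    leftLim (-f) a = -leftLim f a := by
  rcases eq_or_neBot (𝓝[<] a) with hbot | _
  · simp only [leftLim_eq_of_eq_bot _ hbot, Pi.neg_apply]
  by_cases h : ∃ y, Tendsto f (𝓝[<] a) (𝓝 y)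
  · obtain ⟨y, hy⟩ := h
    rw [leftLim_eq_of_tendsto hy, leftLim_eq_of_tendsto (f := -f) hy.neg]
  · have h' : ¬∃ y, Tendsto (-f) (𝓝[<] a) (𝓝 y) := fun ⟨y, hy⟩ =>
      h ⟨-y, by simpa only [Pi.neg_apply, neg_neg] using hy.neg⟩
    rw [leftLim_eq_of_not_tendsto _ h, leftLim_eq_of_not_tendsto _ h', Pi.neg_apply]

theorem TendstoUniformlyOn.tendsto_leftLim {ι α β : Type*} [LinearOrder α] [TopologicalSpace α]
    [OrderTopology α] [MetricSpace β] {F : ι → α → β} {f : α → β} {p : Filter ι} {s : Set α}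
    {a : α} [(𝓝[<] a).NeBot] (h : TendstoUniformlyOn F f p s) (hs : s ∈ 𝓝[<] a)
    (hF : ∀ᶠ i in p, ∃ y, Tendsto (F i) (𝓝[<] a) (𝓝 y)) (hf : ∃ y, Tendsto f (𝓝[<] a) (𝓝 y)) :
    Tendsto (fun i => leftLim (F i) a) p (𝓝 (leftLim f a)) := by
  obtain ⟨L, hL⟩ := hf
  rw [leftLim_eq_of_tendsto hL, Metric.tendsto_nhds]
  intro ε hε
  filter_upwards [hF, Metric.tendstoUniformlyOn_iff.mp h (ε / 2) (half_pos hε)] with i ⟨Li, hLi⟩ hi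
  have hdist : dist Li L ≤ ε / 2 := le_of_tendsto (hLi.dist hL) <| by
    filter_upwards [hs] with x hx using (dist_comm (F i x) (f x) ▸ hi x hx).le
  rw [leftLim_eq_of_tendsto hLi]
  linarith

theorem TendstoUniformlyOn.eventually_forall_pos {ι α : Type*} {F : ι → α → ℝ} {f : α → ℝ}
    {p : Filter ι} {s : Set α} {c : ℝ} (h : TendstoUniformlyOn F f p s) (hc : 0 < c)
    (hf : ∀ x ∈ s, c ≤ f x) : ∀ᶠ i in p, ∀ x ∈ s, 0 < F i x := by
  filter_upwards [Metric.tendstoUniformlyOn_iff.mp h c hc] with i hi x hx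
  have := hi x hx
  rw [Real.dist_eq, abs_lt] at this
  linarith [hf x hx]

theorem le_of_forall_exists_right_le {η : ℝ → ℝ} {a b : ℝ} (hab : a ≤ b)
    (hleft : ∀ u ∈ Ioc a b, ∃ L ≤ η u, Tendsto η (𝓝[<] u) (𝓝 L))
    (hstep : ∀ u ∈ Ico a b, ∃ v ∈ Ioc u b, η u ≤ η v) : η a ≤ η b := by
  set S := {u ∈ Icc a b | η a ≤ η u}
  have haS : a ∈ S := ⟨⟨le_rfl, hab⟩, le_rfl⟩
  obtain ⟨c, hc⟩ : ∃ c, IsLUB S c := ⟨_, isLUB_csSup ⟨a, haS⟩ ⟨b, fun u hu => hu.1.2⟩⟩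
  have hac : a ≤ c := hc.1 haS
  have hcb : c ≤ b := hc.2 fun u hu => hu.1.2
  have hcS : c ∈ S := by
    by_contra hcS
    obtain ⟨L, hLc, hL⟩ := hleft c ⟨hac.lt_of_ne (by rintro rfl; exact hcS haS), hcb⟩
    have hfreq : ∃ᶠ u in 𝓝[<] c, u ∈ S := by
      rw [frequently_nhdsWithin_iff]
      refine (frequently_nhdsWithin_iff.1 (hc.frequently_mem ⟨a, haS⟩)).mono ?_
      rintro u ⟨huS, huc⟩
      exact ⟨huS, lt_of_le_of_ne huc fun h : u = c => hcS (h ▸ huS)⟩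
    have hL : η a ≤ L := isClosed_Ici.mem_of_frequently_of_tendsto (hfreq.mono fun u hu => hu.2) hL
    exact hcS ⟨⟨hac, hcb⟩, hL.trans hLc⟩
  obtain rfl | hcb := hcb.eq_or_lt
  · exact hcS.2
  · obtain ⟨v, hv, hcv⟩ := hstep c ⟨hac, hcb⟩
    exact absurd (hc.1 ⟨⟨hac.trans hv.1.le, hv.2⟩, hcS.2.trans hcv⟩) (not_le.2 hv.1)

theorem le_of_continuousWithinAt_of_forall_exists_right_le {η : ℝ → ℝ} {a b : ℝ} (hab : a ≤ b)
    (ha : ContinuousWithinAt η (Ioi a) a)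
    (hleft : ∀ u ∈ Ioc a b, ∃ L ≤ η u, Tendsto η (𝓝[<] u) (𝓝 L))
    (hstep : ∀ u ∈ Ioo a b, ∃ v ∈ Ioc u b, η u ≤ η v) : η a ≤ η b := by
  obtain rfl | hab := hab.eq_or_lt
  · exact le_rfl
  refine le_of_tendsto ha ?_
  filter_upwards [Ioc_mem_nhdsGT hab] with a' ha'
  exact le_of_forall_exists_right_le ha'.2 (fun u hu => hleft u ⟨ha'.1.trans hu.1, hu.2⟩)
    fun u hu => hstep u ⟨ha'.1.trans_le hu.1, hu.2⟩

theorem Cadlag.sub {f g : ℝ → ℝ} (hf : Cadlag f) (hg : Cadlag g) : Cadlag (f - g) := fun t ht =>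
  ⟨(hf t ht).1.sub (hg t ht).1, fun htpos =>
    let ⟨a, ha⟩ := (hf t ht).2 htpos
    let ⟨b, hb⟩ := (hg t ht).2 htpos
    ⟨a - b, ha.sub hb⟩⟩

theorem Cadlag.neg {f : ℝ → ℝ} (hf : Cadlag f) : Cadlag (-f) := fun t ht =>
  ⟨(hf t ht).1.neg, fun htpos => let ⟨a, ha⟩ := (hf t ht).2 htpos; ⟨-a, ha.neg⟩⟩

theorem tendsto_apply_of_tendstoUniformlyOn_Icc {F : ℕ → ℝ → ℝ} {f : ℝ → ℝ}
    (h : ∀ T : ℝ, 0 < T → TendstoUniformlyOn F f atTop (Icc 0 T)) {t : ℝ} (ht : 0 ≤ t) :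
    Tendsto (fun n => F n t) atTop (𝓝 (f t)) :=
  (h (t + 1) (by linarith)).tendsto_at ⟨ht, by linarith⟩

/-- The condition at `0` encodes the convention `η (0-) = 0`. -/
structure MonotoneWhilePos (g η : ℝ → ℝ) : Prop where
  le_of_pos : ∀ s t, 0 ≤ s → s ≤ t → (∀ u, s < u → u ≤ t → 0 < g u) → η s ≤ η t
  leftLim_le : ∀ t, 0 < t → 0 < g t → leftLim η t ≤ η t
  nonneg_zero : 0 < g 0 → 0 ≤ η 0

theorem esp_iff {l r ψ φ η : ℝ → ℝ} :
    ESP l r ψ φ η ↔ (∀ t, 0 ≤ t → φ t = ψ t + η t ∧ l t ≤ φ t ∧ φ t ≤ r t) ∧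
      MonotoneWhilePos (r - φ) η ∧ MonotoneWhilePos (φ - l) (-η) := by
  constructor
  · rintro ⟨hbd, hup, hdown, hjump, hzero⟩
    refine ⟨hbd, ⟨fun s t hs hst h => hup s t hs hst fun u h1 h2 => sub_pos.1 (h u h1 h2),
      fun t ht h => (hjump t ht).1 (sub_pos.1 h), fun h => hzero.1 (sub_pos.1 h)⟩,
      ⟨fun s t hs hst h => neg_le_neg (hdown s t hs hst fun u h1 h2 => sub_pos.1 (h u h1 h2)),
      fun t ht h => ?_, fun h => neg_nonneg.2 (hzero.2 (sub_pos.1 h))⟩⟩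
    rw [leftLim_neg]
    exact neg_le_neg ((hjump t ht).2 (sub_pos.1 h))
  · rintro ⟨hbd, ⟨hup, hjump_up, hzero_up⟩, ⟨hdown, hjump_down, hzero_down⟩⟩
    refine ⟨hbd, fun s t hs hst h => hup s t hs hst fun u h1 h2 => sub_pos.2 (h u h1 h2),
      fun s t hs hst h => neg_le_neg_iff.1 (hdown s t hs hst fun u h1 h2 => sub_pos.2 (h u h1 h2)),
      fun t ht => ⟨fun h => hjump_up t ht (sub_pos.2 h), fun h => ?_⟩,
      fun h => hzero_up (sub_pos.2 h), fun h => neg_nonneg.1 (hzero_down (sub_pos.2 h))⟩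
    have := hjump_down t ht (sub_pos.2 h)
    rwa [leftLim_neg, Pi.neg_apply, neg_le_neg_iff] at this

theorem exists_right_le_of_tendstoUniformlyOn {gn ηn : ℕ → ℝ → ℝ} {g η : ℝ → ℝ} {u t : ℝ}
    (hu : 0 ≤ u) (hut : u < t) (hgu : 0 < g u) (hg : ContinuousWithinAt g (Ici u) u)
    (hgn : TendstoUniformlyOn gn g atTop (Icc u t))
    (hηn : TendstoUniformlyOn ηn η atTop (Icc u t)) (h : ∀ n, MonotoneWhilePos (gn n) (ηn n)) :
    ∃ v ∈ Ioc u t, η u ≤ η v := by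
  obtain ⟨v', huv', hv'⟩ := mem_nhdsGE_iff_exists_Icc_subset.1
    (hg.eventually (eventually_gt_nhds (half_lt_self hgu)))
  set v := min v' t
  have huv : u < v := lt_min huv' hut
  have hvt : v ≤ t := min_le_right _ _
  have hpos : ∀ᶠ n in atTop, ∀ w ∈ Icc u v, 0 < gn n w :=
    (hgn.mono (Icc_subset_Icc_right hvt)).eventually_forall_pos (half_pos hgu)
      fun w hw => (hv' (Icc_subset_Icc_right (min_le_left _ _) hw)).le
  refine ⟨v, ⟨huv, hvt⟩, le_of_tendsto_of_tendsto (hηn.tendsto_at ⟨le_rfl, hut.le⟩)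
    (hηn.tendsto_at ⟨huv.le, hvt⟩) ?_⟩
  filter_upwards [hpos] with n hn
  exact (h n).le_of_pos u v hu huv.le fun w h1 h2 => hn w ⟨h1.le, h2⟩

theorem MonotoneWhilePos.of_tendstoUniformlyOn {gn ηn : ℕ → ℝ → ℝ} {g η : ℝ → ℝ}
    (hg : Cadlag g) (hη : Cadlag η) (hηn : ∀ n, Cadlag (ηn n))
    (hgn_lim : ∀ T, 0 < T → TendstoUniformlyOn gn g atTop (Icc 0 T))
    (hηn_lim : ∀ T, 0 < T → TendstoUniformlyOn ηn η atTop (Icc 0 T))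
    (h : ∀ n, MonotoneWhilePos (gn n) (ηn n)) : MonotoneWhilePos g η := by
  have hg_at := fun {t} => tendsto_apply_of_tendstoUniformlyOn_Icc hgn_lim (t := t)
  have hη_at := fun {t} => tendsto_apply_of_tendstoUniformlyOn_Icc hηn_lim (t := t)
  have hjump : ∀ t, 0 < t → 0 < g t → leftLim η t ≤ η t := by
    intro t ht hgt
    have hleftLim := (hηn_lim t ht).tendsto_leftLim (Icc_mem_nhdsLT ht)
      (Eventually.of_forall fun n => (hηn n t ht.le).2 ht) ((hη t ht.le).2 ht)
    refine le_of_tendsto_of_tendsto hleftLim (hη_at ht.le) ?_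
    filter_upwards [(hg_at ht.le).eventually (eventually_gt_nhds hgt)] with n hn
    exact (h n).leftLim_le t ht hn
  refine ⟨fun s t hs hst hpos => ?_, hjump, fun hg0 => ?_⟩
  · refine le_of_continuousWithinAt_of_forall_exists_right_le hst
      ((hη s hs).1.mono Ioi_subset_Ici_self) (fun u hu => ?_) (fun u hu => ?_)
    · have hu0 : 0 < u := hs.trans_lt hu.1
      obtain ⟨L, hL⟩ := (hη u hu0.le).2 hu0
      exact ⟨L, leftLim_eq_of_tendsto hL ▸ hjump u hu0 (hpos u hu.1 hu.2), hL⟩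
    · have hu0 : 0 ≤ u := hs.trans hu.1.le
      have ht : 0 < t := hu0.trans_lt hu.2
      exact exists_right_le_of_tendstoUniformlyOn hu0 hu.2 (hpos u hu.1 hu.2.le) (hg u hu0).1
        ((hgn_lim t ht).mono (Icc_subset_Icc_left hu0))
        ((hηn_lim t ht).mono (Icc_subset_Icc_left hu0)) h
  · refine ge_of_tendsto (hη_at le_rfl) ?_
    filter_upwards [(hg_at le_rfl).eventually (eventually_gt_nhds hg0)] with n hn
    exact (h n).nonneg_zero hn

theorem esp_closure_general
    (ln rn ψn φn : ℕ → ℝ → ℝ) (l r ψ φ : ℝ → ℝ)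
    (hψn : ∀ n, Cadlag (ψn n)) (hφn : ∀ n, Cadlag (φn n))
    (hl : Cadlag l) (hr : Cadlag r)
    (hψ : Cadlag ψ) (hφ : Cadlag φ)
    (hconvl : ∀ T : ℝ, 0 < T → TendstoUniformlyOn ln l Filter.atTop (Set.Icc 0 T))
    (hconvr : ∀ T : ℝ, 0 < T → TendstoUniformlyOn rn r Filter.atTop (Set.Icc 0 T))
    (hconvψ : ∀ T : ℝ, 0 < T → TendstoUniformlyOn ψn ψ Filter.atTop (Set.Icc 0 T))
    (hconvφ : ∀ T : ℝ, 0 < T → TendstoUniformlyOn φn φ Filter.atTop (Set.Icc 0 T))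
    (hesp : ∀ n, ESP (ln n) (rn n) (ψn n) (φn n) (fun t => φn n t - ψn n t)) :
    ESP l r ψ φ (fun t => φ t - ψ t) := by
  have hesp_n := fun n => esp_iff.1 (hesp n)
  have hη : Cadlag (φ - ψ) := hφ.sub hψ
  have hηn : ∀ n, Cadlag (φn n - ψn n) := fun n => (hφn n).sub (hψn n)
  have hconvη := fun T hT => (hconvφ T hT).sub (hconvψ T hT)
  refine esp_iff.2 ⟨fun t ht => ⟨by ring, ?_, ?_⟩, ?_, ?_⟩
  · exact le_of_tendsto_of_tendsto' (tendsto_apply_of_tendstoUniformlyOn_Icc hconvl ht)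
      (tendsto_apply_of_tendstoUniformlyOn_Icc hconvφ ht) fun n => ((hesp_n n).1 t ht).2.1
  · exact le_of_tendsto_of_tendsto' (tendsto_apply_of_tendstoUniformlyOn_Icc hconvφ ht)
      (tendsto_apply_of_tendstoUniformlyOn_Icc hconvr ht) fun n => ((hesp_n n).1 t ht).2.2
  · exact .of_tendstoUniformlyOn (hr.sub hφ) hη hηn (fun T hT => (hconvr T hT).sub (hconvφ T hT))
      hconvη fun n => (hesp_n n).2.1
  · exact .of_tendstoUniformlyOn (hφ.sub hl) hη.neg (fun n => (hηn n).neg)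
      (fun T hT => (hconvφ T hT).sub (hconvl T hT)) (fun T hT => (hconvη T hT).neg)
      fun n => (hesp_n n).2.2

/-- Closure property of the extended Skorokhod problem: if `ψ_n → ψ`, `ℓ_n → ℓ`,
`r_n → r` and `φ_n → φ` uniformly on compact subsets of `[0, ∞)`, and for each `n`
the pair `(φ_n, φ_n - ψ_n)` solves the ESP on `[ℓ_n(·), r_n(·)]` for `ψ_n`, then
`(φ, φ - ψ)` solves the ESP on `[ℓ(·), r(·)]` for `ψ`. -/
theorem esp_closure
    (ln rn ψn φn : ℕ → ℝ → ℝ) (l r ψ φ : ℝ → ℝ)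
    (hln : ∀ n, Cadlag (ln n)) (hrn : ∀ n, Cadlag (rn n))
    (hlrn : ∀ n, ∀ t : ℝ, 0 ≤ t → ln n t ≤ rn n t)
    (hψn : ∀ n, Cadlag (ψn n)) (hφn : ∀ n, Cadlag (φn n))
    (hl : Cadlag l) (hr : Cadlag r) (hlr : ∀ t : ℝ, 0 ≤ t → l t ≤ r t)
    (hψ : Cadlag ψ) (hφ : Cadlag φ)
    (hconvl : ∀ T : ℝ, 0 < T → TendstoUniformlyOn ln l Filter.atTop (Set.Icc 0 T))
    (hconvr : ∀ T : ℝ, 0 < T → TendstoUniformlyOn rn r Filter.atTop (Set.Icc 0 T))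
    (hconvψ : ∀ T : ℝ, 0 < T → TendstoUniformlyOn ψn ψ Filter.atTop (Set.Icc 0 T))
    (hconvφ : ∀ T : ℝ, 0 < T → TendstoUniformlyOn φn φ Filter.atTop (Set.Icc 0 T))
    (hesp : ∀ n, ESP (ln n) (rn n) (ψn n) (φn n) (fun t => φn n t - ψn n t)) :
    ESP l r ψ φ (fun t => φ t - ψ t) :=
  esp_closure_general ln rn ψn φn l r ψ φ hψn hφn hl hr hψ hφ hconvl hconvr hconvψ hconvφ hesp
end

section
/- Any solution of the ESP satisfies the jump relation: φ(0) = π_0(ψ(0)) and for every t > 0, φ(t) = π_t( φ(t−) + ψ(t) − ψ(t−) ), where π_t(x) = (x ∧ r(t)) ∨ ℓ(t). -/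
open Set Filter

/-!
At a jump time `t > 0` write `φ(t) = x + Δη(t)` with `x = φ(t-) + ψ(t) - ψ(t-)`, using
`φ(t-) = ψ(t-) + η(t-)`. The sign conditions on `Δη(t)` say that `φ(t)` can sit strictly below
`r(t)` only if it was pushed up from `x`, and strictly above `ℓ(t)` only if it was pushed down;
together with `φ(t) ∈ [ℓ(t), r(t)]` this pins `φ(t)` down as the projection of `x` onto
`[ℓ(t), r(t)]`. At time `0` the same argument applies with `x = ψ(0)`, since `η(0-) = 0`.
-/

open Function Topology

theorem eq_max_min_of_mem_Icc {x y lo hi : ℝ} (hlo : lo ≤ y) (hhi : y ≤ hi)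
    (hup : y < hi → x ≤ y) (hdown : lo < y → y ≤ x) :
    y = max (min x hi) lo := by
  rcases hhi.lt_or_eq with hyhi | rfl
  · rcases hlo.lt_or_eq with hloy | rfl
    · have hxy : x = y := le_antisymm (hup hyhi) (hdown hloy)
      rw [hxy, min_eq_left hhi, max_eq_left hlo]
    · rw [min_eq_left ((hup hyhi).trans hhi), max_eq_right (hup hyhi)]
  · rcases hlo.lt_or_eq with hloy | rfl
    · rw [min_eq_right (hdown hloy), max_eq_left hlo]
    · simp

theorem Cadlag.tendsto_leftLim {f : ℝ → ℝ} (hf : Cadlag f) {t : ℝ} (ht : 0 < t) :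
    Tendsto f (𝓝[<] t) (𝓝 (leftLim f t)) := by
  obtain ⟨a, ha⟩ := (hf t ht.le).2 ht
  rwa [leftLim_eq_of_tendsto ha]

namespace ESP

variable {l r ψ φ η : ℝ → ℝ}

theorem leftLim_eq_add (h : ESP l r ψ φ η) (hψ : Cadlag ψ) (hη : Cadlag η) {t : ℝ}
    (ht : 0 < t) : leftLim φ t = leftLim ψ t + leftLim η t := by
  have hsum : ψ + η =ᶠ[𝓝[<] t] φ := by
    filter_upwards [Ioo_mem_nhdsLT ht] with u hu
    exact (h.1 u hu.1.le).1.symm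
  exact leftLim_eq_of_tendsto (((hψ.tendsto_leftLim ht).add (hη.tendsto_leftLim ht)).congr' hsum)

theorem eq_proj_zero (h : ESP l r ψ φ η) : φ 0 = max (min (ψ 0) (r 0)) (l 0) := by
  obtain ⟨hφψη, hl0, hr0⟩ := h.1 0 le_rfl
  refine eq_max_min_of_mem_Icc hl0 hr0 (fun hlt => ?_) (fun hgt => ?_)
  · linarith [h.2.2.2.2.1 hlt]
  · linarith [h.2.2.2.2.2 hgt]

theorem eq_proj_of_pos (h : ESP l r ψ φ η) (hψ : Cadlag ψ) (hη : Cadlag η) {t : ℝ}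
    (ht : 0 < t) :
    φ t = max (min (leftLim φ t + ψ t - leftLim ψ t) (r t)) (l t) := by
  obtain ⟨hφψη, hl_le, hle_r⟩ := h.1 t ht.le
  have hφ_left := h.leftLim_eq_add hψ hη ht
  refine eq_max_min_of_mem_Icc hl_le hle_r (fun hlt => ?_) (fun hgt => ?_)
  · linarith [(h.2.2.2.1 t ht).1 hlt]
  · linarith [(h.2.2.2.1 t ht).2 hgt]

end ESP

theorem esp_jump_relation_general (l r ψ φ η : ℝ → ℝ)
    (hψ : Cadlag ψ) (hη : Cadlag η)
    (h : ESP l r ψ φ η) :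
    φ 0 = max (min (ψ 0) (r 0)) (l 0) ∧
    ∀ t : ℝ, 0 < t →
      φ t = max (min (Function.leftLim φ t + ψ t - Function.leftLim ψ t) (r t)) (l t) :=
  ⟨h.eq_proj_zero, fun _ ht => h.eq_proj_of_pos hψ hη ht⟩

/-- Any càdlàg solution `(φ, η)` of the extended Skorokhod problem satisfies the jump
relation: `φ(0) = π₀(ψ(0))` and, for each `t > 0`,
`φ(t) = π_t( φ(t-) + ψ(t) - ψ(t-) )`, where `π_t(x) = (x ∧ r(t)) ∨ ℓ(t)`. -/
theorem esp_jump_relation (l r ψ φ η : ℝ → ℝ)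
    (hl : Cadlag l) (hr : Cadlag r) (hlr : ∀ t : ℝ, 0 ≤ t → l t ≤ r t)
    (hψ : Cadlag ψ) (hφ : Cadlag φ) (hη : Cadlag η)
    (h : ESP l r ψ φ η) :
    φ 0 = max (min (ψ 0) (r 0)) (l 0) ∧
    ∀ t : ℝ, 0 < t →
      φ t = max (min (Function.leftLim φ t + ψ t - Function.leftLim ψ t) (r t)) (l t) :=
  esp_jump_relation_general l r ψ φ η hψ hη h
end
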